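/- arXiv:2409.03035 — 5 statements merged into one kernel-verified Lean document; each statement's English description precedes it below -/
import Mathlib

section
/- Let A be a commutative ring, S a submonoid of A, and A' an A-algebra with IsLocalization S A'. Let B be an A-algebra, T a submonoid of B containing the image of S under the structure map A → B, and B' a B-algebra with IsLocalization T B', where B' is given its induced A'-algebra structure (compatible with all the scalar-tower structures). Then the canonical B-linear map Ω_{B/A} → Ω_{B'/A'} exhibits Ω_{B'/A'} as the localization of the module Ω_{B/A} at T; that is, IsLocalizedModule T holds for the canonical map of Kähler differentials. -/
/-! `B'` is a localization of `B`, hence formally étale over it, so `Ω[B'⁄A]` is the base change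
`B' ⊗[B] Ω[B⁄A]`, i.e. the localization of `Ω[B⁄A]` at `T`. And `Ω[A'⁄A] = 0` because `A'` is a
localization of `A`, so `Ω[B'⁄A] → Ω[B'⁄A']` is an isomorphism. -/

open KaehlerDifferential

section

variable (R S B : Type*) [CommRing R] [CommRing S] [CommRing B]
  [Algebra R S] [Algebra S B] [Algebra R B] [IsScalarTower R S B]

-- Injectivity is exactness of `B ⊗[S] Ω[S⁄R] → Ω[B⁄R] → Ω[B⁄S]`, whose first term vanishes.
theorem KaehlerDifferential.map_bijective_of_subsingleton [Subsingleton Ω[S⁄R]] :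
    Function.Bijective (map R S B B) := by
  refine ⟨?_, map_surjective R S B⟩
  rw [injective_iff_map_eq_zero]
  intro x hx
  obtain ⟨y, rfl⟩ := (exact_mapBaseChange_map R S B x).mp hx
  rw [Subsingleton.elim y 0, map_zero]

theorem KaehlerDifferential.restrictScalars_map_comp_map (A : Type*) [CommRing A] [Algebra R A]
    [Algebra A B] [IsScalarTower R A B] [SMulCommClass S A B] :
    (map R S B B).restrictScalars A ∘ₗ map R R A B = map R S A B := by
  ext a
  simp

end

theorem isLocalizedModule_map_kaehlerDifferential_general
    (A : Type*) [CommRing A] (S : Submonoid A)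
    (A' : Type*) [CommRing A'] [Algebra A A'] [IsLocalization S A']
    (B : Type*) [CommRing B] [Algebra A B]
    (T : Submonoid B)
    (B' : Type*) [CommRing B'] [Algebra B B'] [IsLocalization T B']
    [Algebra A B'] [Algebra A' B'] [IsScalarTower A B B'] [IsScalarTower A A' B']
    [SMulCommClass A' B B'] :
    IsLocalizedModule T (KaehlerDifferential.map A A' B B') := by
  have : Algebra.FormallyUnramified A A' := .of_isLocalization S
  rw [← restrictScalars_map_comp_map]
  exact (IsLocalizedModule.comp_iff_of_bijective_left T _
    (map_bijective_of_subsingleton A A' B')).mpr (isLocalizedModule_map A B B' T)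

/-- Localization of Kähler differentials: if `A'` is the localization of `A` at `S` and
`B'` is the localization of `B` at a submonoid `T` containing the image of `S`, then the
canonical map `Ω[B⁄A] → Ω[B'⁄A']` exhibits `Ω[B'⁄A']` as the localization of `Ω[B⁄A]`
at `T`. -/
theorem isLocalizedModule_map_kaehlerDifferential
    (A : Type*) [CommRing A] (S : Submonoid A)
    (A' : Type*) [CommRing A'] [Algebra A A'] [IsLocalization S A']
    (B : Type*) [CommRing B] [Algebra A B]
    (T : Submonoid B) (hST : Algebra.algebraMapSubmonoid B S ≤ T)
    (B' : Type*) [CommRing B'] [Algebra B B'] [IsLocalization T B']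
    [Algebra A B'] [Algebra A' B'] [IsScalarTower A B B'] [IsScalarTower A A' B']
    [SMulCommClass A' B B'] :
    IsLocalizedModule T (KaehlerDifferential.map A A' B B') :=
  isLocalizedModule_map_kaehlerDifferential_general A S A' B T B'
end

section
/- Let p be a prime and let B be a commutative ring of characteristic p which is perfect (the Frobenius endomorphism x ↦ x^p is bijective). Then B is formally étale over the prime field 𝔽_p = ZMod p; that is, for every square-zero extension of (ZMod p)-algebras, ring homomorphisms from B lift uniquely. -/
/-!
If `I` is a square-zero ideal of a ring `C` of characteristic `p`, then `(x + i) ^ p = x ^ p` for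
`i ∈ I`, so the Frobenius of `C` factors through a ring map `C ⧸ I → C`. When `B` is perfect,
a homomorphism `f : B → C ⧸ I` therefore lifts to `C` by first taking `p`-th roots in `B` and then
applying this map, and every lift `g` of `f` is of this form since `g b = g (b ^ (1/p)) ^ p`.
Over `ZMod p` every ring homomorphism is an algebra homomorphism, so nothing else is needed.
-/

open Ideal.Quotient

theorem Ideal.pow_eq_zero_of_mem_of_sq_eq_bot {R : Type*} [CommSemiring R] {I : Ideal R}
    (hI : I ^ 2 = ⊥) {x : R} (hx : x ∈ I) {n : ℕ} (hn : 2 ≤ n) : x ^ n = 0 := by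
  have : x ^ n ∈ I ^ 2 := Ideal.pow_le_pow_right hn (Ideal.pow_mem_pow hx n)
  rwa [hI, Ideal.mem_bot] at this

section Frobenius

variable (p : ℕ) {B C : Type*} [CommSemiring B] [CommRing C] [ExpChar B p] [PerfectRing B p]
  [ExpChar C p] {I : Ideal C} (hI : ∀ x ∈ I, x ^ p = 0)

def Ideal.Quotient.liftFrobenius : C ⧸ I →+* C :=
  lift I (frobenius C p) hI

@[simp]
theorem Ideal.Quotient.liftFrobenius_mk (x : C) : liftFrobenius p hI (mk I x) = x ^ p :=
  rfl

theorem Ideal.Quotient.mk_liftFrobenius (x : C ⧸ I) : mk I (liftFrobenius p hI x) = x ^ p := by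
  obtain ⟨x, rfl⟩ := mk_surjective x
  rw [liftFrobenius_mk, map_pow]

noncomputable def Ideal.Quotient.liftOfPerfectRing (f : B →+* C ⧸ I) : B →+* C :=
  (liftFrobenius p hI).comp (f.comp (frobeniusEquiv B p).symm)

theorem Ideal.Quotient.mk_comp_liftOfPerfectRing (f : B →+* C ⧸ I) :
    (mk I).comp (liftOfPerfectRing p hI f) = f := by
  ext b
  rw [liftOfPerfectRing, RingHom.comp_apply, RingHom.comp_apply, RingHom.comp_apply,
    mk_liftFrobenius, ← map_pow, RingEquiv.coe_toRingHom, frobeniusEquiv_symm_pow_p]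

theorem Ideal.Quotient.liftOfPerfectRing_mk_comp (g : B →+* C) :
    liftOfPerfectRing p hI ((mk I).comp g) = g := by
  ext b
  rw [liftOfPerfectRing, RingHom.comp_apply, RingHom.comp_apply, RingHom.comp_apply,
    liftFrobenius_mk, ← map_pow, RingEquiv.coe_toRingHom, frobeniusEquiv_symm_pow_p]

noncomputable def Ideal.Quotient.ringHomEquivOfPerfectRing : (B →+* C) ≃ (B →+* C ⧸ I) where
  toFun := (mk I).comp
  invFun := liftOfPerfectRing p hI
  left_inv := liftOfPerfectRing_mk_comp p hI
  right_inv := mk_comp_liftOfPerfectRing p hI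

end Frobenius

def ZMod.algHomEquivRingHom (n : ℕ) (A C : Type*) [Semiring A] [Semiring C]
    [Algebra (ZMod n) A] [Algebra (ZMod n) C] : (A →ₐ[ZMod n] C) ≃ (A →+* C) where
  toFun := AlgHom.toRingHom
  invFun f := { f with
    commutes' := DFunLike.congr_fun (RingHom.ext_zmod (f.comp (algebraMap _ A)) (algebraMap _ C)) }

theorem ZMod.bijective_mkₐ_comp_iff {n : ℕ} {A C : Type*} [Semiring A] [CommRing C]
    [Algebra (ZMod n) A] [Algebra (ZMod n) C] (I : Ideal C) :
    Function.Bijective ((mkₐ (ZMod n) I).comp : (A →ₐ[ZMod n] C) → A →ₐ[ZMod n] C ⧸ I) ↔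
      Function.Bijective ((mk I).comp : (A →+* C) → A →+* C ⧸ I) := by
  have : (mkₐ (ZMod n) I).comp = (algHomEquivRingHom n A (C ⧸ I)).symm ∘ (mk I).comp ∘
      algHomEquivRingHom n A C := rfl
  rw [this, Equiv.comp_bijective, Equiv.bijective_comp]

/-- A perfect ring `B` of characteristic `p` is formally étale over the prime field
`𝔽_p = ZMod p` (with the canonical algebra structure coming from `CharP B p`). -/
theorem formallyEtale_zmod_of_perfectRing
    (p : ℕ) [Fact p.Prime] (B : Type) [CommRing B] [CharP B p] [PerfectRing B p] :
    letI : Algebra (ZMod p) B := ZMod.algebra B p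
    Algebra.FormallyEtale (ZMod p) B := by
  let : Algebra (ZMod p) B := ZMod.algebra B p
  rw [Algebra.FormallyEtale.iff_comp_bijective]
  intro C _ _ I hI
  rcases subsingleton_or_nontrivial C with _ | _
  -- the zero ring does not have characteristic `p`
  · exact ⟨fun _ _ _ ↦ Subsingleton.elim _ _, fun _ ↦ ⟨default, Subsingleton.elim _ _⟩⟩
  have : CharP C p := charP_of_injective_algebraMap' (ZMod p) p
  rw [ZMod.bijective_mkₐ_comp_iff]
  exact (ringHomEquivOfPerfectRing p fun x hx ↦
    I.pow_eq_zero_of_mem_of_sq_eq_bot hI hx (Fact.out : p.Prime).two_le).bijective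
end

section
/- Let p be a prime, n ≥ 1, and let B be a nontrivial commutative ring of characteristic p which is perfect (Frobenius is bijective). Then the ring of length-n truncated Witt vectors W_n(B) = TruncatedWittVector p n B has characteristic p^n, and the zeroth-coefficient ring homomorphism W_n(B) → B is surjective with kernel equal to the principal ideal generated by p; in particular it induces a ring isomorphism W_n(B)/(p) ≅ B. -/
/-!
Truncation `𝕎 B → W_n(B)` is surjective, so everything is read off from the full Witt vectors.
There `p ^ i` has a single nonzero coefficient, in position `i`; hence `p ^ n = 0` but
`p ^ i ≠ 0` for `i < n` in `W_n(B)`, and the characteristic is `p ^ n`. As `B` is perfect, a Witt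
vector `x` with `x.coeff 0 = 0` is `V (shift x) = F⁻¹ (shift x) * p`, so the kernel of the zeroth
coefficient on `𝕎 B` is `(p)`, and its image under truncation is the kernel on `W_n(B)`.
-/

open WittVector

namespace TruncatedWittVector

variable {p : ℕ} [Fact p.Prime] {n : ℕ} {R : Type*} [CommRing R]

theorem p_pow_eq_zero [CharP R p] : (p : TruncatedWittVector p n R) ^ n = 0 := by
  ext i
  rw [← map_natCast (WittVector.truncate n), ← map_pow, WittVector.coeff_truncate, coeff_zero]
  exact coeff_p_pow_eq_zero p R i.2.ne

instance charP [CharP R p] : CharP (TruncatedWittVector p n R) (p ^ n) := by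
  obtain ⟨c, hc⟩ := CharP.exists (TruncatedWittVector p n R)
  have hc_dvd : c ∣ p ^ n := by
    rw [← CharP.cast_eq_zero_iff (TruncatedWittVector p n R) c, Nat.cast_pow]
    exact p_pow_eq_zero
  obtain ⟨i, hi, rfl⟩ := (Nat.dvd_prime_pow Fact.out).1 hc_dvd
  obtain rfl : i = n := eq_of_le_of_cast_pow_eq_zero p n R i hi <| by
    rw [← Nat.cast_pow, CharP.cast_eq_zero]
  exact hc

theorem ker_truncate_le_ker_constantCoeff (hn : 1 ≤ n) :
    RingHom.ker (WittVector.truncate (p := p) (R := R) n) ≤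
      RingHom.ker (WittVector.constantCoeff (p := p) (R := R)) :=
  fun x hx => (mem_ker_truncate n x).1 hx 0 hn

variable (p R) in
noncomputable def constantCoeff (hn : 1 ≤ n) : TruncatedWittVector p n R →+* R :=
  (WittVector.truncate n).liftOfRightInverse out truncateFun_out
    ⟨WittVector.constantCoeff, ker_truncate_le_ker_constantCoeff hn⟩

theorem constantCoeff_comp_truncate (hn : 1 ≤ n) :
    (constantCoeff p R hn).comp (WittVector.truncate n) = WittVector.constantCoeff :=
  RingHom.liftOfRightInverse_comp _ _ _ _

theorem constantCoeff_apply (hn : 1 ≤ n) (x : TruncatedWittVector p n R) :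
    constantCoeff p R hn x = x.coeff ⟨0, hn⟩ := by
  obtain ⟨a, rfl⟩ := WittVector.truncate_surjective p n R x
  rw [← RingHom.comp_apply, constantCoeff_comp_truncate, WittVector.coeff_truncate,
    WittVector.constantCoeff_apply]

theorem constantCoeff_surjective (hn : 1 ≤ n) : Function.Surjective (constantCoeff p R hn) := by
  refine Function.Surjective.of_comp (g := WittVector.truncate n) ?_
  rw [← RingHom.coe_comp, constantCoeff_comp_truncate]
  exact WittVector.constantCoeff_surjective p

theorem ker_constantCoeff [CharP R p] [PerfectRing R p] (hn : 1 ≤ n) :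
    RingHom.ker (constantCoeff p R hn) = Ideal.span {(p : TruncatedWittVector p n R)} :=
  calc RingHom.ker (constantCoeff p R hn)
      = ((RingHom.ker (constantCoeff p R hn)).comap (WittVector.truncate n)).map
          (WittVector.truncate n) :=
        (Ideal.map_comap_of_surjective _ (WittVector.truncate_surjective p n R) _).symm
    _ = (Ideal.span {(p : WittVector p R)}).map (WittVector.truncate n) := by
        rw [RingHom.comap_ker, constantCoeff_comp_truncate, WittVector.ker_constantCoeff]
    _ = Ideal.span {(p : TruncatedWittVector p n R)} := by
        rw [Ideal.map_span, Set.image_singleton, map_natCast]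

end TruncatedWittVector

theorem truncatedWittVector_charP_and_zeroth_coeff_general
    (p n : ℕ) [Fact p.Prime] (hn : 1 ≤ n)
    (B : Type*) [CommRing B] [CharP B p] [PerfectRing B p] :
    CharP (TruncatedWittVector p n B) (p ^ n) ∧
    ∃ f : TruncatedWittVector p n B →+* B,
      (∀ x, f x = x.coeff ⟨0, hn⟩) ∧
      Function.Surjective f ∧
      RingHom.ker f = Ideal.span {(p : TruncatedWittVector p n B)} ∧
      Nonempty ((TruncatedWittVector p n B ⧸
        Ideal.span {(p : TruncatedWittVector p n B)}) ≃+* B) := by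
  have hker := TruncatedWittVector.ker_constantCoeff (R := B) hn
  have hsurj := TruncatedWittVector.constantCoeff_surjective (p := p) (R := B) hn
  refine ⟨inferInstance, TruncatedWittVector.constantCoeff p B hn,
    TruncatedWittVector.constantCoeff_apply hn, hsurj, hker, ?_⟩
  exact ⟨(Ideal.quotEquivOfEq hker.symm).trans (RingHom.quotientKerEquivOfSurjective hsurj)⟩

/-- For a nontrivial perfect ring `B` of characteristic `p` and `n ≥ 1`, the truncated
Witt vectors `W_n(B)` have characteristic `p^n`, and the zeroth-coefficient ring
homomorphism `W_n(B) → B` is surjective with kernel the ideal `(p)`; in particular it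
induces a ring isomorphism `W_n(B)/(p) ≅ B`. -/
theorem truncatedWittVector_charP_and_zeroth_coeff
    (p n : ℕ) [Fact p.Prime] (hn : 1 ≤ n)
    (B : Type*) [CommRing B] [Nontrivial B] [CharP B p] [PerfectRing B p] :
    CharP (TruncatedWittVector p n B) (p ^ n) ∧
    ∃ f : TruncatedWittVector p n B →+* B,
      (∀ x, f x = x.coeff ⟨0, hn⟩) ∧
      Function.Surjective f ∧
      RingHom.ker f = Ideal.span {(p : TruncatedWittVector p n B)} ∧
      Nonempty ((TruncatedWittVector p n B ⧸
        Ideal.span {(p : TruncatedWittVector p n B)}) ≃+* B) :=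
  truncatedWittVector_charP_and_zeroth_coeff_general p n hn B
end

section
/- Let p be a prime and n ≥ 1. Let C be a commutative (ZMod (p^n))-algebra which is flat as a (ZMod (p^n))-module, and suppose the quotient ring C̄ = C/(p) (the quotient of C by the principal ideal generated by p) has characteristic p and is perfect (Frobenius is bijective). Then C is isomorphic as a ring to the length-n truncated Witt vectors TruncatedWittVector p n C̄; in other words, a flat deformation of a perfect ring of characteristic p over Z/p^n is unique up to isomorphism and is given by truncated Witt vectors. -/
/-! Since `p ^ n = 0` in `C`, the `(n-1)`-st ghost component of a Witt vector over `C` depends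
only on its first `n` coefficients modulo `p`; this gives Fontaine's ring homomorphism
`θ : W_n(C/p) → C`, which modulo `p` is `x ↦ x₀ ^ p ^ (n-1)`. As `C/p` is perfect, `θ` is
surjective modulo the nilpotent element `p`, hence surjective. For injectivity, write a nonzero
Witt vector over the perfect ring `C/p` as `p ^ k * b` with `b₀ ≠ 0`. If `k < n` and
`p ^ k * θ b = 0`, flatness over `ℤ/p^n` gives `p ∣ θ b`, i.e. `b₀ ^ p ^ (n-1) = 0`, which is
impossible in a perfect ring; if `k ≥ n`, then `p ^ k * b` is already zero in `W_n(C/p)`. -/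

open WittVector

theorem Module.Flat.exists_eq_smul_of_smul_eq_zero {R M : Type*} [CommRing R] [AddCommGroup M]
    [Module R M] [Module.Flat R M] {r s : R} (hrs : ∀ a : R, s * a = 0 → r ∣ a) {y : M}
    (hy : s • y = 0) : ∃ z, y = r • z := by
  obtain ⟨k, a, z, hyz, hsa⟩ :=
    Module.Flat.isTrivialRelation_of_sum_smul_eq_zero (f := fun _ : Unit ↦ s) (x := fun _ ↦ y)
      (by simpa using hy)
  choose c hc using fun j ↦ hrs (a () j) (by simpa using hsa j)
  refine ⟨∑ j, c j • z j, ?_⟩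
  rw [show y = ∑ j, a () j • z j from hyz (), Finset.smul_sum]
  simp only [hc, mul_smul]

theorem ZMod.natCast_dvd_of_pow_mul_eq_zero {p n k : ℕ} (hp : 0 < p) (hk : k < n)
    {a : ZMod (p ^ n)} (h : (p : ZMod (p ^ n)) ^ k * a = 0) : (p : ZMod (p ^ n)) ∣ a := by
  have : NeZero (p ^ n) := ⟨(pow_pos hp n).ne'⟩
  obtain ⟨a, rfl⟩ := ZMod.natCast_zmod_surjective a
  rw [← Nat.cast_pow, ← Nat.cast_mul, ZMod.natCast_eq_zero_iff] at h
  refine Nat.cast_dvd_cast (Nat.dvd_of_mul_dvd_mul_left (pow_pos hp k) ?_)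
  exact (pow_dvd_pow p hk).trans h

theorem natCast_dvd_of_pow_mul_eq_zero_of_flat {p n k : ℕ} (hp : 0 < p) (hk : k < n)
    {C : Type*} [CommRing C] [Algebra (ZMod (p ^ n)) C] [Module.Flat (ZMod (p ^ n)) C] {y : C}
    (h : (p : C) ^ k * y = 0) : (p : C) ∣ y := by
  obtain ⟨z, rfl⟩ := Module.Flat.exists_eq_smul_of_smul_eq_zero (r := (p : ZMod (p ^ n)))
    (fun a ha ↦ ZMod.natCast_dvd_of_pow_mul_eq_zero hp hk ha) (y := y)
    (s := (p : ZMod (p ^ n)) ^ k) (by rwa [Algebra.smul_def, map_pow, map_natCast])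
  exact ⟨z, by rw [Algebra.smul_def, map_natCast]⟩

theorem RingHom.surjective_of_surjective_mod_isNilpotent {A C : Type*} [CommRing A]
    [CommRing C] (f : A →+* C) {a : C} (ha : a ∈ f.range) (hnil : IsNilpotent a)
    (hf : Function.Surjective ((Ideal.Quotient.mk (Ideal.span {a})).comp f)) :
    Function.Surjective f := by
  obtain ⟨b, rfl⟩ := ha
  obtain ⟨N, hN⟩ := hnil
  have approx : ∀ c k, ∃ t d, c = f t + f b ^ k * d := by
    intro c k
    induction k with
    | zero => exact ⟨0, c, by simp⟩
    | succ k ih =>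
      obtain ⟨t, d, hc⟩ := ih
      obtain ⟨t', ht'⟩ := hf (Ideal.Quotient.mk _ d)
      obtain ⟨e, he⟩ := Ideal.mem_span_singleton.mp (Ideal.Quotient.eq.mp ht'.symm)
      refine ⟨t + b ^ k * t', e, ?_⟩
      rw [hc, map_add, map_mul, map_pow]
      linear_combination f b ^ k * he
  intro c
  obtain ⟨t, d, hc⟩ := approx c N
  exact ⟨t, by rw [hc, hN, zero_mul, add_zero]⟩

theorem TruncatedWittVector.p_pow_eq_zero_s9 (p n : ℕ) [Fact p.Prime] (R : Type*) [CommRing R]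
    [CharP R p] : (p : TruncatedWittVector p n R) ^ n = 0 := by
  ext i
  rw [← map_natCast (WittVector.truncate n), ← map_pow, WittVector.coeff_truncate,
    coeff_p_pow_eq_zero p R i.2.ne, TruncatedWittVector.coeff_zero]

theorem WittVector.mk_ghostComponent {p : ℕ} [Fact p.Prime] {C : Type*} [CommRing C] (m : ℕ)
    (y : WittVector p C) :
    Ideal.Quotient.mk (Ideal.span {(p : C)}) (ghostComponent m y) =
      Ideal.Quotient.mk _ (y.coeff 0) ^ p ^ m := by
  have hp : Ideal.Quotient.mk (Ideal.span {(p : C)}) p = 0 :=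
    Ideal.Quotient.eq_zero_iff_mem.mpr (Ideal.mem_span_singleton_self _)
  rw [ghostComponent_apply, aeval_wittPolynomial, Finset.sum_range_succ', map_add, map_sum]
  simp [hp]

namespace TruncatedWittVector

variable {p : ℕ} [Fact p.Prime] {C : Type*} [CommRing C] (m : ℕ)

theorem ker_truncate_comp_map_mk_le_ker_ghostComponent (hp : (p : C) ^ (m + 1) = 0) :
    RingHom.ker ((WittVector.truncate (m + 1)).comp
      (WittVector.map (Ideal.Quotient.mk (Ideal.span {(p : C)})))) ≤
      RingHom.ker (ghostComponent m : WittVector p C →+* C) := by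
  intro y hy
  rw [RingHom.mem_ker, ← zero_dvd_iff, ← hp]
  refine pow_dvd_ghostComponent_of_dvd_coeff fun i hi ↦ ?_
  have := congrArg (TruncatedWittVector.coeff ⟨i, Nat.lt_succ_of_le hi⟩) (RingHom.mem_ker.mp hy)
  rwa [RingHom.comp_apply, WittVector.coeff_truncate, map_coeff, coeff_zero,
    Ideal.Quotient.eq_zero_iff_mem, Ideal.mem_span_singleton] at this

noncomputable def theta (hp : (p : C) ^ (m + 1) = 0) :
    TruncatedWittVector p (m + 1) (C ⧸ Ideal.span {(p : C)}) →+* C :=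
  RingHom.liftOfSurjective ((WittVector.truncate (m + 1)).comp
      (WittVector.map (Ideal.Quotient.mk (Ideal.span {(p : C)}))))
    ((WittVector.truncate_surjective p _ _).comp (map_surjective _ Ideal.Quotient.mk_surjective))
    ⟨ghostComponent m, ker_truncate_comp_map_mk_le_ker_ghostComponent m hp⟩

variable (hp : (p : C) ^ (m + 1) = 0)

theorem theta_truncate_map_mk (y : WittVector p C) :
    theta m hp (WittVector.truncate (m + 1) (map (Ideal.Quotient.mk _) y)) = ghostComponent m y :=
  RingHom.liftOfSurjective_comp_apply _ _ _ y

theorem mk_theta_truncate (x : WittVector p (C ⧸ Ideal.span {(p : C)})) :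
    Ideal.Quotient.mk _ (theta m hp (WittVector.truncate (m + 1) x)) = x.coeff 0 ^ p ^ m := by
  obtain ⟨y, rfl⟩ := map_surjective _ Ideal.Quotient.mk_surjective x
  rw [theta_truncate_map_mk, mk_ghostComponent, map_coeff]

theorem theta_surjective [CharP (C ⧸ Ideal.span {(p : C)}) p]
    [PerfectRing (C ⧸ Ideal.span {(p : C)}) p] : Function.Surjective (theta m hp) := by
  refine (theta m hp).surjective_of_surjective_mod_isNilpotent ⟨p, map_natCast _ p⟩ ⟨m + 1, hp⟩
    fun c ↦ ?_
  obtain ⟨r, hr⟩ := (iterateFrobeniusEquiv (C ⧸ Ideal.span {(p : C)}) p m).surjective c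
  exact ⟨WittVector.truncate (m + 1) (teichmuller p r), by
    rw [RingHom.comp_apply, mk_theta_truncate, teichmuller_coeff_zero, ← hr,
      iterateFrobeniusEquiv_def]⟩

theorem theta_injective [Algebra (ZMod (p ^ (m + 1))) C] [Module.Flat (ZMod (p ^ (m + 1))) C]
    [CharP (C ⧸ Ideal.span {(p : C)}) p] [PerfectRing (C ⧸ Ideal.span {(p : C)}) p] :
    Function.Injective (theta m hp) := by
  rw [injective_iff_map_eq_zero]
  intro t ht
  obtain ⟨x, rfl⟩ := WittVector.truncate_surjective p (m + 1) _ t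
  by_contra hx
  obtain ⟨k, b, hb, rfl⟩ := exists_eq_pow_p_mul x (by rintro rfl; exact hx (map_zero _))
  rw [map_mul, map_pow, map_natCast] at hx ht
  have hk : k < m + 1 := by
    by_contra! hk
    exact hx (by rw [pow_eq_zero_of_le hk (p_pow_eq_zero_s9 p _ _), zero_mul])
  rw [map_mul, map_pow, map_natCast] at ht
  obtain ⟨c, hc⟩ := natCast_dvd_of_pow_mul_eq_zero_of_flat (Fact.out : p.Prime).pos hk ht
  apply hb
  apply (iterateFrobeniusEquiv (C ⧸ Ideal.span {(p : C)}) p m).injective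
  rw [iterateFrobeniusEquiv_def, map_zero, ← mk_theta_truncate m hp, hc, map_mul,
    Ideal.Quotient.eq_zero_iff_mem.mpr (Ideal.mem_span_singleton_self _), zero_mul]

end TruncatedWittVector

/-- Uniqueness of flat deformations of perfect rings of characteristic `p` over `ℤ/p^n`:
if `C` is a flat `ZMod (p^n)`-algebra whose reduction `C/(p)` has characteristic `p` and
is perfect, then `C` is isomorphic to the length-`n` truncated Witt vectors of `C/(p)`. -/
theorem flat_deformation_eq_truncatedWittVector
    (p n : ℕ) [Fact p.Prime] (hn : 1 ≤ n)
    (C : Type*) [CommRing C] [Algebra (ZMod (p ^ n)) C] [Module.Flat (ZMod (p ^ n)) C]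
    [CharP (C ⧸ Ideal.span {(p : C)}) p] [PerfectRing (C ⧸ Ideal.span {(p : C)}) p] :
    Nonempty (C ≃+* TruncatedWittVector p n (C ⧸ Ideal.span {(p : C)})) := by
  obtain ⟨m, rfl⟩ : ∃ m, n = m + 1 := ⟨n - 1, by omega⟩
  have hp : (p : C) ^ (m + 1) = 0 := by
    rw [← Nat.cast_pow, ← map_natCast (algebraMap (ZMod (p ^ (m + 1))) C), ZMod.natCast_self,
      map_zero]
  exact ⟨(RingEquiv.ofBijective (TruncatedWittVector.theta m hp)
    ⟨TruncatedWittVector.theta_injective m hp, TruncatedWittVector.theta_surjective m hp⟩).symm⟩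
end

section
/- Let p be a prime and R a commutative ring which is p-adically complete (complete and separated for the topology defined by the ideal (p), i.e. IsAdicComplete (Ideal.span {p}) R) and p-torsion-free (p·x = 0 implies x = 0 for x ∈ R). Assume the quotient R/(p) has characteristic p, and let R^♭ = Perfection(R/(p), p) be the inverse-limit perfection of R/(p) along Frobenius, with canonical projection pr₀ : R^♭ → R/(p) given by the zeroth component. Then there exists a unique ring homomorphism θ : W(R^♭) → R from the p-typical Witt vectors of R^♭ to R such that for every Witt vector x, the image θ(x) modulo (p) equals pr₀ applied to the zeroth Witt coefficient of x; that is, the reduction of θ modulo p is the canonical map W(R^♭) → R^♭ → R/(p). (This is Fontaine's map.) -/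
/-!
θ is the `p`-adic limit of the maps `W(R^♭) → R/p^(n+1)` induced by the ghost components
(`WittVector.fontaineTheta`). For uniqueness, a ring map out of `W(A)`, `A` perfect, is
determined modulo the nilpotent `p` by its values on Teichmüller representatives, and
`[x] = [x^(1/p^n)]^(p^n)`: raising to the `p^n`-th power turns a congruence modulo `p` into one
modulo `p^(n+1)`, so two maps agreeing modulo `p` agree modulo every power of `p`.
-/

open Ideal

namespace WittVector

variable {p : ℕ} [Fact p.Prime] {A : Type*} [CommRing A] [CharP A p] [PerfectRing A p]
  {R : Type*} [CommRing R]

theorem mk_pow_comp_eq_of_mk_eq (f g : WittVector p A →+* R)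
    (h : ∀ x, Ideal.Quotient.mk (span {(p : R)}) (f x) =
      Ideal.Quotient.mk (span {(p : R)}) (g x)) (n : ℕ) :
    (Ideal.Quotient.mk (span {(p : R)} ^ (n + 1))).comp f =
      (Ideal.Quotient.mk (span {(p : R)} ^ (n + 1))).comp g := by
  refine eq_of_apply_teichmuller_eq _ _ ⟨n + 1, ?_⟩ fun x => ?_
  · rw [← map_natCast (Ideal.Quotient.mk _), ← map_pow, Ideal.Quotient.eq_zero_iff_mem]
    exact pow_mem_pow (mem_span_singleton_self _) _
  · set y := (_root_.frobeniusEquiv A p).symm^[n] x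
    have hy : teichmuller p x = teichmuller p y ^ p ^ n := by
      rw [← map_pow, iterate_frobeniusEquiv_symm_pow_p_pow]
    have hmodp : (p : R) ∣ f (teichmuller p y) - g (teichmuller p y) :=
      mem_span_singleton.mp (Ideal.Quotient.eq.mp (h _))
    rw [RingHom.comp_apply, RingHom.comp_apply, hy, map_pow f, map_pow g, Ideal.Quotient.eq,
      span_singleton_pow, mem_span_singleton]
    exact dvd_sub_pow_of_dvd_sub hmodp n

theorem ringHom_ext_of_mk_eq [IsHausdorff (span {(p : R)}) R] (f g : WittVector p A →+* R)
    (h : ∀ x, Ideal.Quotient.mk (span {(p : R)}) (f x) =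
      Ideal.Quotient.mk (span {(p : R)}) (g x)) :
    f = g := by
  ext x
  rw [IsHausdorff.eq_iff_smodEq (I := span {(p : R)})]
  rintro (_ | n)
  · simp
  · rw [smul_eq_mul, mul_top, SModEq.sub_mem, ← Ideal.Quotient.eq]
    exact RingHom.congr_fun (mk_pow_comp_eq_of_mk_eq f g h n) x

end WittVector

theorem not_isUnit_natCast_of_charP_quotient {p : ℕ} (hp : p ≠ 1) {R : Type*} [CommRing R]
    [CharP (R ⧸ span {(p : R)}) p] : ¬IsUnit (p : R) := by
  have : Nontrivial (R ⧸ span {(p : R)}) := CharP.nontrivial_of_char_ne_one hp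
  rw [← span_singleton_eq_top]
  exact Ideal.Quotient.nontrivial_iff.mp this

theorem fontaine_theta_exists_unique_general
    (p : ℕ) [Fact p.Prime] (R : Type*) [CommRing R]
    [IsAdicComplete (Ideal.span {(p : R)}) R]
    [CharP (R ⧸ Ideal.span {(p : R)}) p] :
    ∃! θ : WittVector p (Perfection (R ⧸ Ideal.span {(p : R)}) p) →+* R,
      ∀ x, Ideal.Quotient.mk (Ideal.span {(p : R)}) (θ x) =
        Perfection.coeff (R ⧸ Ideal.span {(p : R)}) p 0 (x.coeff 0) := by
  have : Fact ¬IsUnit (p : R) :=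
    ⟨not_isUnit_natCast_of_charP_quotient (Fact.out : p.Prime).ne_one⟩
  refine ⟨WittVector.fontaineTheta R p, WittVector.mk_fontaineTheta, fun θ hθ => ?_⟩
  exact WittVector.ringHom_ext_of_mk_eq _ _ fun x =>
    (hθ x).trans (WittVector.mk_fontaineTheta x).symm

/-- **Fontaine's map.**  Let `R` be a `p`-adically complete, `p`-torsion-free commutative
ring whose reduction `R/(p)` has characteristic `p`, and let `R^♭` be the inverse-limit
perfection of `R/(p)`.  Then there is a unique ring homomorphism
`θ : W(R^♭) → R` whose reduction modulo `p` sends a Witt vector `x` to the zeroth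
component of its zeroth coefficient. -/
theorem fontaine_theta_exists_unique
    (p : ℕ) [Fact p.Prime] (R : Type*) [CommRing R]
    [IsAdicComplete (Ideal.span {(p : R)}) R]
    (htf : ∀ x : R, (p : R) * x = 0 → x = 0)
    [CharP (R ⧸ Ideal.span {(p : R)}) p] :
    ∃! θ : WittVector p (Perfection (R ⧸ Ideal.span {(p : R)}) p) →+* R,
      ∀ x, Ideal.Quotient.mk (Ideal.span {(p : R)}) (θ x) =
        Perfection.coeff (R ⧸ Ideal.span {(p : R)}) p 0 (x.coeff 0) :=
  fontaine_theta_exists_unique_general p R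
end
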